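/- For q ≥ 3, the set P = {σ_inc, σ_dec}, where σ_inc(u) = (u+1) mod q and σ_dec(u) = (u-1) mod q, is a (q, ⌊(q-1)/2⌋)-proper set. -/
import Mathlib


/-- `σ` is a cyclic permutation of `Z_q` with a single cycle whose orbit is all of `Z_q`:
every element can be reached from every element by iterating `σ`. -/
def IsFullCycle {q : ℕ} (σ : Equiv.Perm (ZMod q)) : Prop :=
  ∀ u v : ZMod q, ∃ β : ℕ, (σ ^ β) u = v

/-- `P` is a `(q, l)`-proper set: a set of single-`q`-cycle permutations of `Z_q` such that
for all `(u, v) ∈ Z_q²` and all `β` with `1 ≤ β ≤ l` there is at most one `σ ∈ P`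
with `v = σ^β(u)`. -/
def IsProperSet (q l : ℕ) (P : Set (Equiv.Perm (ZMod q))) : Prop :=
  (∀ σ ∈ P, IsFullCycle σ) ∧
  ∀ u v : ZMod q, ∀ β : ℕ, 1 ≤ β → β ≤ l →
    ∀ σ ∈ P, ∀ π ∈ P, (σ ^ β) u = v → (π ^ β) u = v → σ = π

/-- The `l`-follower set `Ω_l^σ(u) = {σ^β(u) : 1 ≤ β ≤ l}`. -/
def followerSet {q : ℕ} (l : ℕ) (σ : Equiv.Perm (ZMod q)) (u : ZMod q) : Set (ZMod q) :=
  {v | ∃ β : ℕ, 1 ≤ β ∧ β ≤ l ∧ (σ ^ β) u = v}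


lemma addRight_pow_apply {q : ℕ} (a : ZMod q) (β : ℕ) (u : ZMod q) :
    ((Equiv.addRight a) ^ β) u = u + β • a := by
  induction β with
  | zero => simp
  | succ n ih =>
      rw [pow_succ', Equiv.Perm.mul_apply, ih, succ_nsmul]
      simp [Equiv.addRight, add_assoc]

lemma two_beta_ne {q : ℕ} (hq : 3 ≤ q) (u : ZMod q) (β : ℕ) (h1 : 1 ≤ β)
    (h2 : β ≤ (q-1)/2) (h : u + β • (1 : ZMod q) = u + β • (-1 : ZMod q)) : False := by
  haveI : NeZero q := ⟨by omega⟩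
  have h2' : ((2*β : ℕ) : ZMod q) = 0 := by
    push_cast
    simp only [nsmul_eq_mul, mul_neg, mul_one] at h
    have := add_left_cancel h
    linear_combination this
  rw [ZMod.natCast_eq_zero_iff] at h2'
  have := Nat.le_of_dvd (by omega) h2'
  omega

theorem inc_dec_properSet (q : ℕ) (hq : 3 ≤ q) :
    IsProperSet q ((q - 1) / 2)
      {Equiv.addRight (1 : ZMod q), Equiv.addRight (-1 : ZMod q)} := by
  haveI : NeZero q := ⟨by omega⟩
  constructor
  · rintro σ (rfl | rfl) u v
    · exact ⟨(v - u).val, by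
        rw [addRight_pow_apply]
        simp [ZMod.natCast_rightInverse (v - u)]⟩
    · exact ⟨(u - v).val, by
        rw [addRight_pow_apply]
        have : (((u - v).val : ℕ) : ZMod q) = u - v := ZMod.natCast_rightInverse (u - v)
        simp [this]⟩
  · rintro u v β h1 h2 σ (rfl | rfl) π (rfl | rfl) hσ hπ <;> try rfl
    · rw [addRight_pow_apply] at hσ hπ
      exact (two_beta_ne hq u β h1 h2 (hσ.trans hπ.symm)).elim
    · rw [addRight_pow_apply] at hσ hπ
      exact (two_beta_ne hq u β h1 h2 (hπ.trans hσ.symm)).elim
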